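/- arXiv:math/0207298 — 2 statements merged into one kernel-verified Lean document; each statement's English description precedes it below -/
import Mathlib

section
/- Let x be a positive bounded operator on H with Tr(x) < ∞ and suppose Tr(Θ(x)) = d·Tr(x). Then for every positive bounded operator y on H with y ≤ x, one has Tr(Θ(y)) = d·Tr(y). -/
/-! The functional `z ↦ Tr Θ(z)` is additive on positive operators and satisfies
`Tr Θ(z) ≤ d · Tr z` for every positive `z`. Writing `x = y + (x - y)` with both summands
positive, equality at `x` together with `Tr x < ∞` forces equality at both summands.

For the bound, Θ is rewritten with only `d` Kraus operators `s_k = ∑ᵢ u_{k,i} tᵢ`, where the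
`u_k` form an orthonormal basis of the orthogonal complement of the kernel of `u ↦ ∑ᵢ uᵢ tᵢ` on
`ℂⁿ`; the matrix expressing the `tᵢ` through the `s_k` is an isometry, so the Kraus sum is
unchanged. Cauchy–Schwarz and `∑ tᵢ tᵢ* ≤ 1` make each `s_k` a contraction, and
`Tr(s z s*) ≤ Tr z` for contractions `s`, by `Tr(a a*) = Tr(a* a)` applied to `a = s z^{1/2}`. -/

open Filter Finset ContinuousLinearMap
open scoped ENNReal

/-- The trace (in `[0,∞]`) of an operator on a complex Hilbert space, computed in a
Hilbert (orthonormal) basis `b`: `Tr A = ∑ᵢ ⟨bᵢ, A bᵢ⟩` (real part, clamped to `[0,∞]`).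
For a positive operator this is the usual trace, independent of the choice of basis. -/
noncomputable def opTrace {H : Type*} [NormedAddCommGroup H] [InnerProductSpace ℂ H]
    [CompleteSpace H] {ι : Type*} (b : HilbertBasis ι ℂ H) (A : H →L[ℂ] H) : ℝ≥0∞ :=
  ∑' i, ENNReal.ofReal (inner ℂ (b i) (A (b i)) : ℂ).re

open scoped InnerProductSpace Matrix

theorem ENNReal.eq_of_add_eq_add_of_le {a b c d : ℝ≥0∞} (hac : a ≤ c) (hbd : b ≤ d)
    (h : a + b = c + d) (hd : d ≠ ⊤) : a = c :=
  le_antisymm hac <| ENNReal.le_of_add_le_add_right hd <| h ▸ add_le_add_right hbd a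

section Parseval

variable {ι 𝕜 E : Type*} [RCLike 𝕜] [NormedAddCommGroup E] [InnerProductSpace 𝕜 E]

theorem HilbertBasis.ofReal_norm_sq_eq_tsum (b : HilbertBasis ι 𝕜 E) (x : E) :
    ENNReal.ofReal (‖x‖ ^ 2) = ∑' i, ENNReal.ofReal (‖⟪b i, x⟫_𝕜‖ ^ 2) := by
  have h := lp.hasSum_norm (p := 2) (by norm_num) (b.repr x)
  simp only [ENNReal.toReal_ofNat, Real.rpow_two, LinearIsometryEquiv.norm_map,
    b.repr_apply_apply] at h
  rw [← h.tsum_eq, ENNReal.ofReal_tsum_of_nonneg (fun _ => by positivity) h.summable]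

theorem HilbertBasis.tsum_ofReal_norm_sq_adjoint_apply [CompleteSpace E]
    (b : HilbertBasis ι 𝕜 E) (a : E →L[𝕜] E) :
    ∑' i, ENNReal.ofReal (‖adjoint a (b i)‖ ^ 2) = ∑' i, ENNReal.ofReal (‖a (b i)‖ ^ 2) := by
  simp only [b.ofReal_norm_sq_eq_tsum (adjoint a _), b.ofReal_norm_sq_eq_tsum (a _),
    adjoint_inner_right]
  rw [ENNReal.tsum_comm]
  simp only [norm_inner_symm]

end Parseval

section Trace

variable {H : Type*} [NormedAddCommGroup H] [InnerProductSpace ℂ H] [CompleteSpace H]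
  {ι : Type*} (b : HilbertBasis ι ℂ H)

theorem opTrace_add {A B : H →L[ℂ] H} (hA : 0 ≤ A) (hB : 0 ≤ B) :
    opTrace b (A + B) = opTrace b A + opTrace b B := by
  rw [nonneg_iff_isPositive] at hA hB
  simp only [opTrace, ← ENNReal.tsum_add, add_apply, inner_add_right, Complex.add_re]
  exact tsum_congr fun i =>
    ENNReal.ofReal_add (hA.re_inner_nonneg_right _) (hB.re_inner_nonneg_right _)

theorem opTrace_sum {κ : Type*} (s : Finset κ) {A : κ → H →L[ℂ] H} (hA : ∀ k ∈ s, 0 ≤ A k) :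
    opTrace b (∑ k ∈ s, A k) = ∑ k ∈ s, opTrace b (A k) := by
  classical
  induction s using Finset.induction_on with
  | empty => simp [opTrace]
  | insert k s hk ih =>
    have hs : ∀ j ∈ s, 0 ≤ A j := fun j hj => hA j (mem_insert_of_mem hj)
    rw [sum_insert hk, sum_insert hk,
      opTrace_add b (hA k (mem_insert_self k s)) (sum_nonneg hs), ih hs]

theorem opTrace_star_mul_self (a : H →L[ℂ] H) :
    opTrace b (star a * a) = ∑' i, ENNReal.ofReal (‖a (b i)‖ ^ 2) := by
  refine tsum_congr fun i => ?_
  rw [star_eq_adjoint, apply_norm_sq_eq_inner_adjoint_right]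
  rfl

theorem opTrace_mul_star_self (a : H →L[ℂ] H) :
    opTrace b (a * star a) = opTrace b (star a * a) := by
  rw [opTrace_star_mul_self, ← b.tsum_ofReal_norm_sq_adjoint_apply, ← star_eq_adjoint,
    ← opTrace_star_mul_self, star_star]

theorem opTrace_conj_le_of_norm_le_one {a z : H →L[ℂ] H} (ha : ‖a‖ ≤ 1) (hz : 0 ≤ z) :
    opTrace b (a * z * star a) ≤ opTrace b z := by
  set r := CFC.sqrt z
  have hr : IsSelfAdjoint r := (CFC.sqrt_nonneg z).isSelfAdjoint
  have hrr : star r * r = z := by rw [hr.star_eq, CFC.sqrt_mul_sqrt_self z hz]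
  have hconj : a * z * star a = (a * r) * star (a * r) := by
    rw [star_mul, hr.star_eq, ← hrr, hr.star_eq]
    noncomm_ring
  rw [hconj, opTrace_mul_star_self, opTrace_star_mul_self, ← hrr, opTrace_star_mul_self]
  refine ENNReal.tsum_le_tsum fun i => ENNReal.ofReal_le_ofReal ?_
  gcongr
  exact (le_opNorm a _).trans (mul_le_of_le_one_left (norm_nonneg _) ha)

end Trace

theorem sum_mul_mul_star_eq_of_conjTranspose_mul_eq_one {A : Type*} [Ring A] [StarRing A]
    [Algebra ℂ A] [StarModule ℂ A] {ι κ : Type*} [Fintype ι] [Fintype κ] [DecidableEq κ]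
    {c : Matrix ι κ ℂ} (hc : cᴴ * c = 1) (s : κ → A) (z : A) :
    ∑ i, (∑ k, c i k • s k) * z * star (∑ k, c i k • s k) = ∑ k, s k * z * star (s k) := by
  have hcoef : ∀ k l, ∑ i, star (c i l) * c i k = if l = k then 1 else 0 := fun k l => by
    simpa [Matrix.mul_apply, Matrix.one_apply] using congrFun (congrFun hc l) k
  calc ∑ i, (∑ k, c i k • s k) * z * star (∑ k, c i k • s k)
      = ∑ i, ∑ l, ∑ k, (star (c i l) * c i k) • (s k * z * star (s l)) := by
        simp only [star_sum, star_smul, sum_mul, mul_sum, smul_sum, smul_mul_assoc,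
          mul_smul_comm, smul_smul]
    _ = ∑ l, ∑ k, (∑ i, star (c i l) * c i k) • (s k * z * star (s l)) := by
        simp only [sum_smul]
        rw [sum_comm]
        exact sum_congr rfl fun l _ => sum_comm
    _ = ∑ k, s k * z * star (s k) := by
        simp only [hcoef, ite_smul, one_smul, zero_smul, sum_ite_eq, mem_univ, if_true]

theorem LinearMap.exists_orthonormal_apply_eq_sum_inner_smul {𝕜 E W : Type*} [RCLike 𝕜]
    [NormedAddCommGroup E] [InnerProductSpace 𝕜 E] [FiniteDimensional 𝕜 E]
    [AddCommGroup W] [Module 𝕜 W] (φ : E →ₗ[𝕜] W) :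
    ∃ e : Fin (Module.finrank 𝕜 (LinearMap.range φ)) → E,
      Orthonormal 𝕜 e ∧ ∀ x, φ x = ∑ k, ⟪e k, x⟫_𝕜 • φ (e k) := by
  have hdim : Module.finrank 𝕜 (LinearMap.ker φ)ᗮ = Module.finrank 𝕜 (LinearMap.range φ) := by
    have := (LinearMap.ker φ).finrank_add_finrank_orthogonal
    have := φ.finrank_range_add_finrank_ker
    omega
  set K := LinearMap.ker φ
  let e := (stdOrthonormalBasis 𝕜 Kᗮ).reindex (finCongr hdim)
  refine ⟨fun k => e k, e.orthonormal.comp_linearIsometry Kᗮ.subtypeₗᵢ, fun x => ?_⟩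
  have hker : x - Kᗮ.starProjection x ∈ K := by
    simpa only [Submodule.orthogonal_orthogonal] using Kᗮ.sub_starProjection_mem_orthogonal x
  rw [← sub_add_cancel x (Kᗮ.starProjection x), map_add, hker, zero_add,
    Submodule.starProjection_apply, e.orthogonalProjectionOnto_apply_eq_sum]
  simp

theorem LinearMap.exists_orthonormal_sum_mul_mul_star_eq {E A : Type*} [NormedAddCommGroup E]
    [InnerProductSpace ℂ E] [FiniteDimensional ℂ E] [Ring A] [StarRing A] [Algebra ℂ A]
    [StarModule ℂ A] {ι : Type*} [Fintype ι] (φ : E →ₗ[ℂ] A) (f : OrthonormalBasis ι ℂ E) :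
    ∃ e : Fin (Module.finrank ℂ (LinearMap.range φ)) → E, Orthonormal ℂ e ∧
      ∀ z, ∑ i, φ (f i) * z * star (φ (f i)) = ∑ k, φ (e k) * z * star (φ (e k)) := by
  obtain ⟨e, he, hφ⟩ := φ.exists_orthonormal_apply_eq_sum_inner_smul
  refine ⟨e, he, fun z => ?_⟩
  let c : Matrix ι (Fin _) ℂ := .of fun i k => ⟪e k, f i⟫_ℂ
  have hc : cᴴ * c = 1 := by
    ext k l
    simp only [Matrix.mul_apply, Matrix.conjTranspose_apply, Matrix.of_apply, c, RCLike.star_def,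
      inner_conj_symm]
    simp_rw [mul_comm ⟪f _, e k⟫_ℂ, f.sum_inner_mul_inner, orthonormal_iff_ite.1 he,
      Matrix.one_apply, eq_comm]
  rw [← sum_mul_mul_star_eq_of_conjTranspose_mul_eq_one hc]
  simp only [c, Matrix.of_apply, ← hφ]

section Contraction

variable {H : Type*} [NormedAddCommGroup H] [InnerProductSpace ℂ H] [CompleteSpace H]
  {ι : Type*} [Fintype ι] {t : ι → H →L[ℂ] H}

theorem sum_norm_sq_star_apply_le (ht : ∑ i, t i * star (t i) ≤ 1) (v : H) :
    ∑ i, ‖star (t i) v‖ ^ 2 ≤ ‖v‖ ^ 2 := by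
  have hpos := ((le_def _ _).1 ht).re_inner_nonneg_right v
  have hnorm : ∀ i, ‖star (t i) v‖ ^ 2 = RCLike.re ⟪v, (t i * star (t i)) v⟫_ℂ := fun i => by
    rw [apply_norm_sq_eq_inner_adjoint_right, star_eq_adjoint, adjoint_adjoint]
    rfl
  simp only [sub_apply, one_apply_eq_self, _root_.sum_apply, inner_sub_right, inner_sum,
    map_sub, map_sum, ← hnorm, inner_self_eq_norm_sq] at hpos
  linarith

theorem norm_sum_smul_le_one (ht : ∑ i, t i * star (t i) ≤ 1) {u : EuclideanSpace ℂ ι}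
    (hu : ‖u‖ ≤ 1) : ‖∑ i, u i • t i‖ ≤ 1 := by
  rw [← norm_star]
  refine opNorm_le_bound _ zero_le_one fun v => ?_
  calc ‖star (∑ i, u i • t i) v‖ ≤ ∑ i, ‖u i‖ * ‖star (t i) v‖ := by
        simp only [star_sum, star_smul, _root_.sum_apply, smul_apply]
        refine (norm_sum_le _ _).trans (le_of_eq (sum_congr rfl fun i _ => ?_))
        rw [norm_smul, RCLike.star_def, RCLike.norm_conj]
    _ ≤ √(∑ i, ‖u i‖ ^ 2) * √(∑ i, ‖star (t i) v‖ ^ 2) := Real.sum_mul_le_sqrt_mul_sqrt _ _ _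
    _ ≤ 1 * ‖v‖ := by
        rw [← EuclideanSpace.norm_eq]
        gcongr
        exact (Real.sqrt_le_left (norm_nonneg v)).2 (sum_norm_sq_star_apply_le ht v)

theorem opTrace_sum_conj_le {ι' : Type*} (b : HilbertBasis ι' ℂ H)
    (ht : ∑ i, t i * star (t i) ≤ 1) {z : H →L[ℂ] H} (hz : 0 ≤ z) :
    opTrace b (∑ i, t i * z * star (t i))
      ≤ Module.finrank ℂ (Submodule.span ℂ (Set.range t)) * opTrace b z := by
  classical
  let φ : EuclideanSpace ℂ ι →ₗ[ℂ] (H →L[ℂ] H) :=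
    (Fintype.linearCombination ℂ t).comp (WithLp.linearEquiv 2 ℂ (ι → ℂ)).toLinearMap
  have hφ : ∀ u, φ u = ∑ i, u i • t i := fun u => Fintype.linearCombination_apply ℂ t u
  have hrange : LinearMap.range φ = Submodule.span ℂ (Set.range t) := by
    rw [LinearMap.range_comp_of_range_eq_top _ (LinearEquiv.range _),
      Fintype.range_linearCombination]
  have hbasis : ∀ i, φ (EuclideanSpace.basisFun ι ℂ i) = t i := fun i => by simp [hφ]
  obtain ⟨e, he, hkraus⟩ :=
    φ.exists_orthonormal_sum_mul_mul_star_eq (EuclideanSpace.basisFun ι ℂ)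
  simp only [hbasis] at hkraus
  rw [hkraus, opTrace_sum b _ fun k _ => star_right_conjugate_nonneg hz _]
  calc ∑ k, opTrace b (φ (e k) * z * star (φ (e k)))
      ≤ ∑ _k, opTrace b z := sum_le_sum fun k _ =>
        opTrace_conj_le_of_norm_le_one b (hφ _ ▸ norm_sum_smul_le_one ht (he.1 k).le) hz
    _ = _ := by rw [sum_const, card_univ, Fintype.card_fin, nsmul_eq_mul, hrange]

end Contraction

theorem trace_scaling_hereditary_general
    {H : Type*} [NormedAddCommGroup H] [InnerProductSpace ℂ H] [CompleteSpace H]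
    {ι : Type*} (b : HilbertBasis ι ℂ H)
    (n : ℕ) (t : Fin n → H →L[ℂ] H)
    (hcontr : ∑ i, t i * star (t i) ≤ 1)
    (Θ : (H →L[ℂ] H) → (H →L[ℂ] H))
    (hΘ : ∀ x, Θ x = ∑ i, t i * x * star (t i))
    (d : ℕ) (hd : d = Module.finrank ℂ (Submodule.span ℂ (Set.range t)))
    (x : H →L[ℂ] H) (hxfin : opTrace b x ≠ ⊤)
    (hscale : opTrace b (Θ x) = (d : ℝ≥0∞) * opTrace b x) :
    ∀ y : H →L[ℂ] H, y.IsPositive → y ≤ x →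
      opTrace b (Θ y) = (d : ℝ≥0∞) * opTrace b y := by
  intro y hy hyx
  have hy0 : 0 ≤ y := (nonneg_iff_isPositive y).2 hy
  have hw0 : 0 ≤ x - y := sub_nonneg.2 hyx
  have hΘ_nonneg : ∀ z, 0 ≤ z → 0 ≤ Θ z := fun z hz => by
    rw [hΘ]
    exact sum_nonneg fun i _ => star_right_conjugate_nonneg hz (t i)
  have hΘ_le : ∀ z, 0 ≤ z → opTrace b (Θ z) ≤ d * opTrace b z := fun z hz => by
    rw [hΘ, hd]
    exact opTrace_sum_conj_le b hcontr hz
  have htr_x : opTrace b x = opTrace b y + opTrace b (x - y) := by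
    rw [← opTrace_add b hy0 hw0, add_sub_cancel]
  have htrΘ_x : opTrace b (Θ x) = opTrace b (Θ y) + opTrace b (Θ (x - y)) := by
    rw [← opTrace_add b (hΘ_nonneg y hy0) (hΘ_nonneg _ hw0)]
    simp only [hΘ, ← sum_add_distrib, ← add_mul, ← mul_add, add_sub_cancel]
  have hfin : (d : ℝ≥0∞) * opTrace b (x - y) ≠ ⊤ :=
    ENNReal.mul_ne_top (ENNReal.natCast_ne_top d)
      (ne_top_of_le_ne_top hxfin (htr_x ▸ le_add_self))
  refine ENNReal.eq_of_add_eq_add_of_le (hΘ_le y hy0) (hΘ_le _ hw0) ?_ hfin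
  rw [← htrΘ_x, hscale, htr_x, mul_add]

/-- Hereditary trace scaling: if `Tr(Θ(x)) = d * Tr(x)` for a positive trace-class
`x`, then `Tr(Θ(y)) = d * Tr(y)` for every positive operator `y ≤ x`. -/
theorem trace_scaling_hereditary
    {H : Type*} [NormedAddCommGroup H] [InnerProductSpace ℂ H] [CompleteSpace H]
    {ι : Type*} (b : HilbertBasis ι ℂ H)
    (n : ℕ) (t : Fin n → H →L[ℂ] H)
    (hcontr : ∑ i, t i * star (t i) ≤ 1)
    (Θ : (H →L[ℂ] H) → (H →L[ℂ] H))
    (hΘ : ∀ x, Θ x = ∑ i, t i * x * star (t i))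
    (d : ℕ) (hd : d = Module.finrank ℂ (Submodule.span ℂ (Set.range t)))
    (x : H →L[ℂ] H) (hx : x.IsPositive) (hxfin : opTrace b x ≠ ⊤)
    (hscale : opTrace b (Θ x) = (d : ℝ≥0∞) * opTrace b x) :
    ∀ y : H →L[ℂ] H, y.IsPositive → y ≤ x →
      opTrace b (Θ y) = (d : ℝ≥0∞) * opTrace b y :=
  trace_scaling_hereditary_general b n t hcontr Θ hΘ d hd x hxfin hscale
end

section
/- Let t be a contraction on H with Tr(1 − tt*) < ∞, and assume t is pure in the sense that t^k (t*)^k h → 0 for every h ∈ H. Then Tr(1 − t*t) is finite and lim_{k→∞} Tr(1 − t^k (t*)^k)/k + Tr(1 − t*t) = Tr(1 − tt*); i.e., the curvature of Θ(a) = t a t* equals Tr(1 − tt*) − Tr(1 − t*t). -/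
/-!
Write `D = (1 - t* t)^{1/2}` and `D_* = (1 - t t*)^{1/2}`. The identity
`‖x‖² = ‖t x‖² + ‖D x‖²` telescopes along powers. Applied to `t*` it gives
`Tr(1 - tᵏ t*ᵏ) = ∑_{j<k} a_j` with `a_j = ‖tʲ D_*‖²_HS`, a decreasing sequence starting at
`Tr(1 - t t*) < ∞`, so the Cesàro means converge to `L = inf a_j`. Applied to `t` it gives
`a_j = a_{j+1} + ‖D tʲ D_*‖²_HS`, hence `Tr(1 - t t*) = L + ∑_j ‖D tʲ D_*‖²_HS`. Since the
Hilbert–Schmidt norm is invariant under adjoints, the last sum is `∑_j ‖D_* t*ʲ D‖²_HS`, and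
telescoping once more with `t*`, where purity kills the remainder, shows it equals
`‖D‖²_HS = Tr(1 - t* t)`.
-/

open Filter Finset ContinuousLinearMap
open scoped ENNReal Topology

lemma eq_add_sum_range_of_eq_add_succ {M : Type*} [AddCommMonoid M] {f g : ℕ → M}
    (h : ∀ j, f j = f (j + 1) + g j) (k : ℕ) : f 0 = f k + ∑ j ∈ range k, g j := by
  induction k with
  | zero => simp
  | succ k ih => rw [ih, h k, sum_range_succ]; abel

namespace ENNReal

lemma eq_add_tsum_of_eq_add_succ {f g : ℕ → ℝ≥0∞} (h : ∀ j, f j = f (j + 1) + g j)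
    {m : ℝ≥0∞} (hf : Tendsto f atTop (𝓝 m)) : f 0 = m + ∑' j, g j :=
  tendsto_nhds_unique (tendsto_const_nhds.congr (eq_add_sum_range_of_eq_add_succ h))
    (hf.add (ENNReal.tendsto_nat_tsum g))

lemma tendsto_sum_range_div_of_tendsto {a : ℕ → ℝ≥0∞} {l : ℝ≥0∞}
    (ha : Tendsto a atTop (𝓝 l)) (ha_top : ∀ j, a j ≠ ⊤) (hl : l ≠ ⊤) :
    Tendsto (fun k : ℕ => (∑ j ∈ range k, a j) / k) atTop (𝓝 l) := by
  have hreal := (ENNReal.continuous_ofReal.tendsto _).comp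
    ((ENNReal.tendsto_toReal hl).comp ha).cesaro
  rw [ENNReal.ofReal_toReal hl] at hreal
  refine hreal.congr' ?_
  filter_upwards [eventually_gt_atTop 0] with k hk
  have hk' : (0 : ℝ) < k := by exact_mod_cast hk
  simp only [Function.comp_apply]
  rw [ENNReal.ofReal_mul (inv_nonneg.2 hk'.le), ENNReal.ofReal_inv_of_pos hk',
    ENNReal.ofReal_natCast, ← ENNReal.toReal_sum fun j _ => ha_top j,
    ENNReal.ofReal_toReal (ENNReal.sum_ne_top.2 fun j _ => ha_top j), div_eq_mul_inv, mul_comm]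

end ENNReal

lemma HilbertBasis.enorm_sq_eq_tsum {𝕜 E ι : Type*} [RCLike 𝕜] [NormedAddCommGroup E]
    [InnerProductSpace 𝕜 E] (b : HilbertBasis ι 𝕜 E) (x : E) :
    ‖x‖ₑ ^ 2 = ∑' i, ‖(inner 𝕜 (b i) x : 𝕜)‖ₑ ^ 2 := by
  have h : HasSum (fun i => ‖(inner 𝕜 (b i) x : 𝕜)‖ ^ 2) (‖x‖ ^ 2) := by
    have := RCLike.hasSum_re 𝕜 (b.hasSum_inner_mul_inner x x)
    simp only [← inner_conj_symm x (b _), RCLike.conj_mul, inner_self_eq_norm_sq] at this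
    convert this using 2 with i
    rw [← RCLike.ofReal_pow, RCLike.ofReal_re]
  simp only [← ofReal_norm, ← ENNReal.ofReal_pow (norm_nonneg _)]
  rw [← ENNReal.ofReal_tsum_of_nonneg (fun _ => by positivity) h.summable, h.tsum_eq]

lemma CStarAlgebra.one_sub_star_mul_self_nonneg {A : Type*} [CStarAlgebra A] [PartialOrder A]
    [StarOrderedRing A] {a : A} (ha : ‖a‖ ≤ 1) : 0 ≤ 1 - star a * a := by
  rw [sub_nonneg, ← CStarAlgebra.norm_le_one_iff_of_nonneg _ (star_mul_self_nonneg a),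
    CStarRing.norm_star_mul_self]
  nlinarith [norm_nonneg a]

section HilbertSpace

variable {H : Type*} [NormedAddCommGroup H] [InnerProductSpace ℂ H] [CompleteSpace H]
  {ι : Type*} (b : HilbertBasis ι ℂ H)

noncomputable def hsNormSq (A : H →L[ℂ] H) : ℝ≥0∞ := ∑' i, ‖A (b i)‖ₑ ^ 2

lemma hsNormSq_star (A : H →L[ℂ] H) : hsNormSq b (star A) = hsNormSq b A := by
  simp only [hsNormSq, b.enorm_sq_eq_tsum]
  rw [ENNReal.tsum_comm]
  refine tsum_congr fun i => tsum_congr fun j => ?_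
  rw [star_eq_adjoint, adjoint_inner_right, ← ofReal_norm, ← ofReal_norm, norm_inner_symm]

lemma re_inner_star_mul_self_apply (A : H →L[ℂ] H) (x : H) :
    (inner ℂ x ((star A * A) x)).re = ‖A x‖ ^ 2 := by
  rw [mul_apply_eq_comp, star_eq_adjoint, adjoint_inner_right, ← RCLike.re_to_complex,
    inner_self_eq_norm_sq]

lemma re_inner_one_sub_star_mul_self_apply (A : H →L[ℂ] H) (x : H) :
    (inner ℂ x ((1 - star A * A) x)).re = ‖x‖ ^ 2 - ‖A x‖ ^ 2 := by
  rw [sub_apply, one_apply_eq_self, inner_sub_right, Complex.sub_re, re_inner_star_mul_self_apply,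
    ← RCLike.re_to_complex, inner_self_eq_norm_sq]

lemma tendsto_apply_zero_of_tendsto_star_mul_self_apply {B : ℕ → H →L[ℂ] H} {x : H}
    (h : Tendsto (fun k => (star (B k) * B k) x) atTop (𝓝 0)) :
    Tendsto (fun k => B k x) atTop (𝓝 0) := by
  have hsq : Tendsto (fun k => ‖B k x‖ ^ 2) atTop (𝓝 0) := by
    refine squeeze_zero (fun _ => by positivity) (fun k => ?_)
      (by simpa using h.norm.const_mul ‖x‖)
    rw [← re_inner_star_mul_self_apply]
    exact (Complex.re_le_norm _).trans (norm_inner_le_norm _ _)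
  rw [tendsto_zero_iff_norm_tendsto_zero]
  simpa [Real.sqrt_sq (norm_nonneg _)] using hsq.sqrt

lemma opTrace_star_mul_self_s15 (A : H →L[ℂ] H) : opTrace b (star A * A) = hsNormSq b A := by
  simp only [opTrace, hsNormSq, re_inner_star_mul_self_apply,
    ENNReal.ofReal_pow (norm_nonneg _), ofReal_norm]

noncomputable def defect (t : H →L[ℂ] H) : H →L[ℂ] H := CFC.sqrt (1 - star t * t)

variable {t : H →L[ℂ] H}

lemma isSelfAdjoint_defect (t : H →L[ℂ] H) : IsSelfAdjoint (defect t) :=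
  .of_nonneg (CFC.sqrt_nonneg _)

lemma star_defect_mul_defect (ht : ‖t‖ ≤ 1) : star (defect t) * defect t = 1 - star t * t := by
  rw [(isSelfAdjoint_defect t).star_eq]
  exact CFC.sqrt_mul_sqrt_self _ (CStarAlgebra.one_sub_star_mul_self_nonneg ht)

lemma opTrace_one_sub_star_mul_self (ht : ‖t‖ ≤ 1) :
    opTrace b (1 - star t * t) = hsNormSq b (defect t) := by
  rw [← star_defect_mul_defect ht, opTrace_star_mul_self_s15]

lemma enorm_sq_eq_enorm_sq_add_enorm_sq_defect (ht : ‖t‖ ≤ 1) (x : H) :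
    ‖x‖ₑ ^ 2 = ‖t x‖ₑ ^ 2 + ‖defect t x‖ₑ ^ 2 := by
  have h : ‖defect t x‖ ^ 2 = ‖x‖ ^ 2 - ‖t x‖ ^ 2 := by
    rw [← re_inner_star_mul_self_apply, star_defect_mul_defect ht,
      re_inner_one_sub_star_mul_self_apply]
  simp only [← ofReal_norm, ← ENNReal.ofReal_pow (norm_nonneg _)]
  rw [← ENNReal.ofReal_add (by positivity) (by positivity), h, add_sub_cancel]

lemma enorm_sq_pow_apply_eq (ht : ‖t‖ ≤ 1) (x : H) (j : ℕ) :
    ‖(t ^ j) x‖ₑ ^ 2 = ‖(t ^ (j + 1)) x‖ₑ ^ 2 + ‖defect t ((t ^ j) x)‖ₑ ^ 2 := by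
  rw [pow_succ' t j, mul_apply_eq_comp]
  exact enorm_sq_eq_enorm_sq_add_enorm_sq_defect ht _

lemma enorm_sq_eq_add_sum_defect (ht : ‖t‖ ≤ 1) (x : H) (k : ℕ) :
    ‖x‖ₑ ^ 2 = ‖(t ^ k) x‖ₑ ^ 2 + ∑ j ∈ range k, ‖defect t ((t ^ j) x)‖ₑ ^ 2 := by
  simpa using eq_add_sum_range_of_eq_add_succ (enorm_sq_pow_apply_eq ht x) k

lemma tsum_enorm_sq_defect_pow_apply (ht : ‖t‖ ≤ 1) {x : H}
    (hx : Tendsto (fun k => (t ^ k) x) atTop (𝓝 0)) :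
    ∑' j, ‖defect t ((t ^ j) x)‖ₑ ^ 2 = ‖x‖ₑ ^ 2 := by
  have hsq : Tendsto (fun k => ‖(t ^ k) x‖ₑ ^ 2) atTop (𝓝 0) := by
    simpa [Function.comp_def] using
      (((ENNReal.continuous_pow 2).comp continuous_enorm).tendsto 0).comp hx
  simpa using (ENNReal.eq_add_tsum_of_eq_add_succ (enorm_sq_pow_apply_eq ht x) hsq).symm

lemma hsNormSq_eq_add (ht : ‖t‖ ≤ 1) (B : H →L[ℂ] H) :
    hsNormSq b B = hsNormSq b (t * B) + hsNormSq b (defect t * B) := by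
  simp only [hsNormSq, mul_apply_eq_comp, ← ENNReal.tsum_add,
    ← enorm_sq_eq_enorm_sq_add_enorm_sq_defect ht]

lemma opTrace_one_sub_pow_mul_star_pow (ht : ‖t‖ ≤ 1) (k : ℕ) :
    opTrace b (1 - t ^ k * star t ^ k) = ∑ j ∈ range k, hsNormSq b (t ^ j * defect (star t)) := by
  have hs : ‖star t‖ ≤ 1 := by rwa [norm_star]
  have hdiag : ∀ x, ENNReal.ofReal (inner ℂ x ((1 - t ^ k * star t ^ k) x)).re =
      ∑ j ∈ range k, ‖defect (star t) ((star t ^ j) x)‖ₑ ^ 2 := fun x => by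
    rw [← star_star (t ^ k), star_pow, re_inner_one_sub_star_mul_self_apply,
      ENNReal.ofReal_sub _ (by positivity)]
    simp only [ENNReal.ofReal_pow (norm_nonneg _), ofReal_norm]
    rw [enorm_sq_eq_add_sum_defect hs x k, ENNReal.add_sub_cancel_left (by simp)]
  have hstar : ∀ j, star (defect (star t) * star t ^ j) = t ^ j * defect (star t) := fun j => by
    rw [star_mul, star_pow, star_star, (isSelfAdjoint_defect _).star_eq]
  simp_rw [← hstar, hsNormSq_star, opTrace, hdiag]
  rw [Summable.tsum_finsetSum fun _ _ => ENNReal.summable]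
  simp only [hsNormSq, mul_apply_eq_comp]

lemma tsum_hsNormSq_defect_mul_pow_mul_defect_star (ht : ‖t‖ ≤ 1)
    (hpure : ∀ x, Tendsto (fun k => (star t ^ k) x) atTop (𝓝 0)) :
    ∑' j, hsNormSq b (defect t * (t ^ j * defect (star t))) = hsNormSq b (defect t) := by
  have hs : ‖star t‖ ≤ 1 := by rwa [norm_star]
  have hstar : ∀ j, star (defect (star t) * (star t ^ j * defect t)) =
      defect t * (t ^ j * defect (star t)) := fun j => by
    rw [star_mul, star_mul, star_pow, star_star, (isSelfAdjoint_defect _).star_eq,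
      (isSelfAdjoint_defect _).star_eq, mul_assoc]
  simp_rw [← hstar, hsNormSq_star]
  simp only [hsNormSq, mul_apply_eq_comp]
  rw [ENNReal.tsum_comm]
  exact tsum_congr fun i => tsum_enorm_sq_defect_pow_apply hs (hpure _)

end HilbertSpace

/-- Pure case of the Parrott-type formula: if `t` is a contraction with
`Tr(1 - t t*) < ∞` and `tᵏ (t*)ᵏ → 0` strongly, then `Tr(1 - t* t)` is finite and
the curvature `lim Tr(1 - tᵏ (t*)ᵏ)/k` satisfies `L + Tr(1 - t* t) = Tr(1 - t t*)`. -/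
theorem parrott_pure_formula
    {H : Type*} [NormedAddCommGroup H] [InnerProductSpace ℂ H] [CompleteSpace H]
    {ι : Type*} (b : HilbertBasis ι ℂ H)
    (t : H →L[ℂ] H) (ht : ‖t‖ ≤ 1)
    (hfin : opTrace b (1 - t * star t) ≠ ⊤)
    (hpure : ∀ h : H,
      Filter.Tendsto (fun k => (t ^ k * (star t) ^ k) h) Filter.atTop (nhds 0)) :
    opTrace b (1 - star t * t) ≠ ⊤ ∧
    ∃ L : ℝ≥0∞,
      Filter.Tendsto (fun (k : ℕ) => opTrace b (1 - t ^ k * (star t) ^ k) / (k : ℝ≥0∞))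
        Filter.atTop (nhds L) ∧
      L + opTrace b (1 - star t * t) = opTrace b (1 - t * star t) := by
  set a : ℕ → ℝ≥0∞ := fun j => hsNormSq b (t ^ j * defect (star t))
  have hstep : ∀ j, a j = a (j + 1) + hsNormSq b (defect t * (t ^ j * defect (star t))) :=
    fun j => by simpa only [a, pow_succ', mul_assoc] using hsNormSq_eq_add b ht _
  have ha_anti : Antitone a := antitone_nat_of_succ_le fun j => (hstep j).symm ▸ le_self_add
  have ha_lim : Tendsto a atTop (𝓝 (⨅ j, a j)) := tendsto_atTop_iInf ha_anti
  have hpure' : ∀ x, Tendsto (fun k => (star t ^ k) x) atTop (𝓝 0) := fun x =>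
    tendsto_apply_zero_of_tendsto_star_mul_self_apply <| by
      simpa only [star_pow, star_star] using hpure x
  have hsplit : a 0 = (⨅ j, a j) + opTrace b (1 - star t * t) := by
    rw [opTrace_one_sub_star_mul_self b ht,
      ← tsum_hsNormSq_defect_mul_pow_mul_defect_star b ht hpure']
    exact ENNReal.eq_add_tsum_of_eq_add_succ hstep ha_lim
  have htrace : opTrace b (1 - t * star t) = a 0 := by
    simpa [a] using opTrace_one_sub_pow_mul_star_pow b ht 1
  have ha0 : a 0 ≠ ⊤ := htrace ▸ hfin
  refine ⟨fun h => ha0 (by rw [hsplit, h, add_top]), ⨅ j, a j, ?_, by rw [htrace, hsplit]⟩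
  simp only [opTrace_one_sub_pow_mul_star_pow b ht]
  exact ENNReal.tendsto_sum_range_div_of_tendsto ha_lim
    (fun j => ne_top_of_le_ne_top ha0 (ha_anti j.zero_le)) (ne_top_of_le_ne_top ha0 (iInf_le a 0))
end
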